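/- arXiv:2210.02371 — 2 statements merged into one kernel-verified Lean document; each statement's English description precedes it below -/
import Mathlib

section
/- With l_i = 2^{2·2^i+4}, m_i = 2^{8·2^i}, n_i = 2^{10·2^i}, for all i ≥ 0 one has |u_i|_0/|u_i| + |v_i|_1/|v_i| ≥ 3/2. -/
/-- The `k`-th power of a finite word `w` (concatenation of `k` copies). -/
def wpow (w : List Bool) (k : ℕ) : List Bool := (List.replicate k w).flatten

/-- The pair of words `(u_i, v_i)`:  `u_0 = 0`, `v_0 = 1`,
`u_{i+1} = u_i^{m_i} v_i^{l_i}`, `v_{i+1} = u_i^{m_i} v_i^{n_i}`. -/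
def uvSeq (l m n : ℕ → ℕ) : ℕ → List Bool × List Bool
  | 0 => ([false], [true])
  | i + 1 =>
      (wpow (uvSeq l m n i).1 (m i) ++ wpow (uvSeq l m n i).2 (l i),
       wpow (uvSeq l m n i).1 (m i) ++ wpow (uvSeq l m n i).2 (n i))

/-- The substitution `σ_h` : `0 ↦ 0^{m_h} 1^{l_h}`, `1 ↦ 0^{m_h} 1^{n_h}`. -/
def subw (l m n : ℕ → ℕ) (h : ℕ) (w : List Bool) : List Bool :=
  w.flatMap fun c => List.replicate (m h) false ++ List.replicate (if c then n h else l h) true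

/-- `wordIter i h = σ_h σ_{h+1} ⋯ σ_{h+i-1}(0)`. -/
def wordIter (l m n : ℕ → ℕ) : ℕ → ℕ → List Bool
  | 0, _ => [false]
  | i + 1, h => subw l m n h (wordIter l m n i (h + 1))

/-- The infinite word `u^{(h)} = lim_i σ_h ⋯ σ_{h+i-1}(0)`. -/
def limWord (l m n : ℕ → ℕ) (h : ℕ) (k : ℕ) : Bool :=
  (wordIter l m n (k + 1) h).getD k false

/-- `w` is a factor of the infinite word `U`. -/
def IsFactor (U : ℕ → Bool) (w : List Bool) : Prop :=
  ∃ k, w = (List.range w.length).map fun j => U (k + j)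

/-- `σ_0 σ_1 ⋯ σ_{h+i-1}` starting at `h`, applied to `w`. -/
def subComp (l m n : ℕ → ℕ) : ℕ → ℕ → List Bool → List Bool
  | 0, _, w => w
  | i + 1, h, w => subw l m n h (subComp l m n i (h + 1) w)

/-- `\hat{σ}_h(w) = 1^{l_h} σ_h(w) 0^{m_h} 1^{l_h}`. -/
def hatw (l m n : ℕ → ℕ) (h : ℕ) (w : List Bool) : List Bool :=
  List.replicate (l h) true ++ subw l m n h w ++
    List.replicate (m h) false ++ List.replicate (l h) true

/-- `hatComp i h w = \hat{σ}_h ⋯ \hat{σ}_{h+i-1}(w)`. -/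
def hatComp (l m n : ℕ → ℕ) : ℕ → ℕ → List Bool → List Bool
  | 0, _, w => w
  | i + 1, h, w => hatw l m n h (hatComp l m n i (h + 1) w)

/-- The complexity function of the infinite word `U`. -/
noncomputable def complexityFn (U : ℕ → Bool) (nn : ℕ) : ℕ :=
  Set.ncard {w : List Bool | w.length = nn ∧ IsFactor U w}

lemma wpow_succ (w : List Bool) (k : ℕ) : wpow w (k+1) = w ++ wpow w k := by
  simp [wpow, List.replicate_succ]
lemma wpow_len (w : List Bool) (k : ℕ) : (wpow w k).length = k * w.length := by
  induction k with
  | zero => simp [wpow]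
  | succ k ih => rw [wpow_succ, List.length_append, ih]; ring
lemma wpow_count (w : List Bool) (k : ℕ) (b : Bool) : (wpow w k).count b = k * w.count b := by
  induction k with
  | zero => simp [wpow]
  | succ k ih => rw [wpow_succ, List.count_append, ih]; ring
lemma count_tf (w : List Bool) : w.count true + w.count false = w.length := by
  induction w with
  | nil => simp
  | cons a t ih => cases a <;> simp [List.count_cons] <;> omega
section
variable (l m n : ℕ → ℕ)
lemma uv_len1 (i : ℕ) : (uvSeq l m n (i+1)).1.length
    = m i * (uvSeq l m n i).1.length + l i * (uvSeq l m n i).2.length := by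
  simp [uvSeq, wpow_len]
lemma uv_len2 (i : ℕ) : (uvSeq l m n (i+1)).2.length
    = m i * (uvSeq l m n i).1.length + n i * (uvSeq l m n i).2.length := by
  simp [uvSeq, wpow_len]
lemma uv_cnt1 (i : ℕ) : (uvSeq l m n (i+1)).1.count false
    = m i * (uvSeq l m n i).1.count false + l i * (uvSeq l m n i).2.count false := by
  simp [uvSeq, wpow_count]
lemma uv_cnt2 (i : ℕ) : (uvSeq l m n (i+1)).2.count false
    = m i * (uvSeq l m n i).1.count false + n i * (uvSeq l m n i).2.count false := by
  simp [uvSeq, wpow_count]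
lemma uv_pos (hm : ∀ i, m i = 2 ^ (8 * 2 ^ i)) (i : ℕ) :
    0 < (uvSeq l m n i).1.length ∧ 0 < (uvSeq l m n i).2.length := by
  induction i with
  | zero => simp [uvSeq]
  | succ i ih =>
    rw [uv_len1, uv_len2]
    have : 0 < m i := by rw [hm]; positivity
    constructor <;>
      exact lt_of_lt_of_le (Nat.mul_pos this ih.1) (Nat.le_add_right _ _)
lemma uv_rel (hl : ∀ i, l i = 2 ^ (2 * 2 ^ i + 4))
    (hm : ∀ i, m i = 2 ^ (8 * 2 ^ i)) (hn : ∀ i, n i = 2 ^ (10 * 2 ^ i)) (i : ℕ) :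
    4 * ((uvSeq l m n (i+1)).2.length : ℝ)
      = (2:ℝ) ^ (2 * 2 ^ (i+1)) * (uvSeq l m n (i+1)).1.length := by
  induction i with
  | zero =>
    rw [uv_len1, uv_len2]
    simp [uvSeq, hl, hm, hn]
    norm_num
  | succ i ih =>
    rw [uv_len1, uv_len2]
    push_cast
    set A : ℝ := ((uvSeq l m n (i+1)).1.length : ℝ)
    set B : ℝ := ((uvSeq l m n (i+1)).2.length : ℝ)
    have hR : (2:ℝ) ^ (2 * 2 ^ (i+1)) * A = 4 * B := ih.symm
    have e1 : ((m (i+1) : ℕ) : ℝ) = ((2:ℝ) ^ (2 * 2 ^ (i+1)))^4 := by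
      rw [hm]; push_cast; rw [← pow_mul]; ring_nf
    have e2 : ((n (i+1) : ℕ) : ℝ) = ((2:ℝ) ^ (2 * 2 ^ (i+1)))^5 := by
      rw [hn]; push_cast; rw [← pow_mul]; ring_nf
    have e3 : ((l (i+1) : ℕ) : ℝ) = 16 * (2:ℝ) ^ (2 * 2 ^ (i+1)) := by
      rw [hl]; push_cast; rw [pow_add]; ring
    have e4 : (2:ℝ) ^ (2 * 2 ^ (i+2)) = ((2:ℝ) ^ (2 * 2 ^ (i+1)))^2 := by
      rw [← pow_mul]; ring_nf
    rw [e1, e2, e3, e4]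
    set R : ℝ := (2:ℝ) ^ (2 * 2 ^ (i+1))
    linear_combination (4*R^3 - R^5) * hR

lemma uv_inv (hl : ∀ i, l i = 2 ^ (2 * 2 ^ i + 4))
    (hm : ∀ i, m i = 2 ^ (8 * 2 ^ i)) (hn : ∀ i, n i = 2 ^ (10 * 2 ^ i)) (i : ℕ) :
    160 * ((2:ℝ) ^ (2 * 2 ^ (i+1)))^2 *
        (((uvSeq l m n (i+1)).1.length : ℝ) - ((uvSeq l m n (i+1)).1.count false : ℝ))
      ≤ (37 * ((2:ℝ) ^ (2 * 2 ^ (i+1)))^2 - 1280) * ((uvSeq l m n (i+1)).1.length : ℝ) ∧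
    160 * ((2:ℝ) ^ (2 * 2 ^ (i+1)))^2 * ((uvSeq l m n (i+1)).2.count false : ℝ)
      ≤ (37 * ((2:ℝ) ^ (2 * 2 ^ (i+1)))^2 - 1280) * ((uvSeq l m n (i+1)).2.length : ℝ) := by
  induction i with
  | zero =>
    rw [uv_len1, uv_len2, uv_cnt1, uv_cnt2]
    simp [uvSeq, hl, hm, hn]
    norm_num
  | succ i ih =>
    obtain ⟨ih1, ih2⟩ := ih
    set A : ℝ := ((uvSeq l m n (i+1)).1.length : ℝ) with hA_def
    set B : ℝ := ((uvSeq l m n (i+1)).2.length : ℝ) with hB_def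
    set a : ℝ := ((uvSeq l m n (i+1)).1.count false : ℝ) with ha_def
    set c : ℝ := ((uvSeq l m n (i+1)).2.count false : ℝ) with hc_def
    set R : ℝ := (2:ℝ) ^ (2 * 2 ^ (i+1)) with hR_def
    have hrel : 4 * B = R * A := uv_rel l m n hl hm hn i
    have e1 : ((m (i+1) : ℕ) : ℝ) = R^4 := by
      rw [hm]; push_cast; rw [hR_def, ← pow_mul]; ring_nf
    have e2 : ((n (i+1) : ℕ) : ℝ) = R^5 := by
      rw [hn]; push_cast; rw [hR_def, ← pow_mul]; ring_nf
    have e3 : ((l (i+1) : ℕ) : ℝ) = 16 * R := by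
      rw [hl]; push_cast; rw [hR_def, pow_add]; ring
    have e4 : (2:ℝ) ^ (2 * 2 ^ (i+1+1)) = R^2 := by
      rw [hR_def, ← pow_mul]; ring_nf
    have eA : ((uvSeq l m n (i+1+1)).1.length : ℝ) = R^4 * A + 16 * R * B := by
      rw [uv_len1]; push_cast; rw [e1, e3]
    have eB : ((uvSeq l m n (i+1+1)).2.length : ℝ) = R^4 * A + R^5 * B := by
      rw [uv_len2]; push_cast; rw [e1, e2]
    have ea : ((uvSeq l m n (i+1+1)).1.count false : ℝ) = R^4 * a + 16 * R * c := by
      rw [uv_cnt1]; push_cast; rw [e1, e3]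
    have ec : ((uvSeq l m n (i+1+1)).2.count false : ℝ) = R^4 * a + R^5 * c := by
      rw [uv_cnt2]; push_cast; rw [e1, e2]
    rw [eA, eB, ea, ec, e4]
    have hR16 : (16:ℝ) ≤ R := by
      rw [hR_def]
      calc (16:ℝ) = 2^4 := by norm_num
      _ ≤ 2 ^ (2 * 2 ^ (i+1)) := by
        apply pow_le_pow_right₀ (by norm_num)
        have : 2 ≤ 2 ^ (i+1) := by
          calc 2 = 2^1 := rfl
          _ ≤ 2 ^ (i+1) := Nat.pow_le_pow_right (by norm_num) (by omega)
        omega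
    have hR0 : (0:ℝ) < R := by linarith
    have hA1 : (1:ℝ) ≤ A := by
      rw [hA_def]; exact_mod_cast (uv_pos l m n hm (i+1)).1
    have hB1 : (1:ℝ) ≤ B := by
      rw [hB_def]; exact_mod_cast (uv_pos l m n hm (i+1)).2
    have ha0 : (0:ℝ) ≤ a := by rw [ha_def]; positivity
    have hc0 : (0:ℝ) ≤ c := by rw [hc_def]; positivity
    have haA : a ≤ A := by
      rw [hA_def, ha_def]
      exact_mod_cast List.count_le_length (a := false) (l := (uvSeq l m n (i+1)).1)
    clear_value A B a c R
    clear hA_def hB_def ha_def hc_def hR_def eA eB ea ec e1 e2 e3 e4 hl hm hn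
    have hA0 : (0:ℝ) ≤ A := by linarith
    have hR1 : (1:ℝ) ≤ R := by linarith
    have h2 : (256:ℝ) ≤ R^2 := by
      calc (256:ℝ) = 16^2 := by norm_num
      _ ≤ R^2 := pow_le_pow_left₀ (by norm_num) hR16 2
    have h24 : R^2 ≤ R^4 := pow_le_pow_right₀ hR1 (by norm_num)
    have h46' : 256*R^4 ≤ R^6 := by
      calc 256*R^4 ≤ R^2*R^4 := mul_le_mul_of_nonneg_right h2 (by positivity)
      _ = R^6 := by ring
    have h68' : 256*R^6 ≤ R^8 := by
      calc 256*R^6 ≤ R^2*R^6 := mul_le_mul_of_nonneg_right h2 (by positivity)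
      _ = R^8 := by ring
    have h46 : R^4 ≤ R^6 := by nlinarith [h46']
    have hpoly1 : (1280*R^4 + 5120*R^2) * A ≤ 788*R^6 * A := by
      have h : 1280*R^4 + 5120*R^2 ≤ 788*R^6 := by linarith
      exact mul_le_mul_of_nonneg_right h hA0
    have hpoly2 : (123*R^8 + 1280*R^4 + 320*R^6) * A ≤ 320*R^8 * A := by
      have h : 123*R^8 + 1280*R^4 + 320*R^6 ≤ 320*R^8 := by linarith
      exact mul_le_mul_of_nonneg_right h hA0
    have H1 : R^6 * (160 * R^2 * (A - a)) ≤ R^6 * ((37 * R^2 - 1280) * A) :=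
      mul_le_mul_of_nonneg_left ih1 (by positivity)
    have H2 : R^7 * (160 * R^2 * c) ≤ R^7 * ((37 * R^2 - 1280) * B) :=
      mul_le_mul_of_nonneg_left ih2 (by positivity)
    have h1b : 4*R*B = R^2*A := by linear_combination R*hrel
    have h5 : 4*R^5*B = R^6*A := by linear_combination R^5*hrel
    have h7 : 4*R^7*B = R^8*A := by linear_combination R^7*hrel
    have hcR : (0:ℝ) ≤ 2560*R^5*c := by positivity
    have hA8 : 160*R^8*a ≤ 160*R^8*A :=
      mul_le_mul_of_nonneg_left haA (by positivity)
    constructor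
    · nlinarith [H1, hpoly1, h1b, h5, hcR]
    · nlinarith [H2, hpoly2, h5, h7, hA8]
end

theorem stmt6 (l m n : ℕ → ℕ) (hl : ∀ i, l i = 2 ^ (2 * 2 ^ i + 4))
    (hm : ∀ i, m i = 2 ^ (8 * 2 ^ i)) (hn : ∀ i, n i = 2 ^ (10 * 2 ^ i)) (i : ℕ) :
    (((uvSeq l m n i).1.count false : ℝ) / ((uvSeq l m n i).1.length : ℝ)) +
      (((uvSeq l m n i).2.count true : ℝ) / ((uvSeq l m n i).2.length : ℝ)) ≥ 3 / 2 := by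
  match i with
  | 0 => simp [uvSeq]; norm_num
  | (j+1) =>
    obtain ⟨inv1, inv2⟩ := uv_inv l m n hl hm hn j
    set A : ℝ := ((uvSeq l m n (j+1)).1.length : ℝ) with hA_def
    set B : ℝ := ((uvSeq l m n (j+1)).2.length : ℝ) with hB_def
    set a : ℝ := ((uvSeq l m n (j+1)).1.count false : ℝ) with ha_def
    set c : ℝ := ((uvSeq l m n (j+1)).2.count false : ℝ) with hc_def
    set bt : ℝ := ((uvSeq l m n (j+1)).2.count true : ℝ) with hbt_def
    have hA1 : (1:ℝ) ≤ A := by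
      rw [hA_def]; exact_mod_cast (uv_pos l m n hm (j+1)).1
    have hB1 : (1:ℝ) ≤ B := by
      rw [hB_def]; exact_mod_cast (uv_pos l m n hm (j+1)).2
    have hbtc : bt + c = B := by
      rw [hbt_def, hc_def, hB_def]; exact_mod_cast count_tf (uvSeq l m n (j+1)).2
    set K : ℝ := ((2:ℝ) ^ (2 * 2 ^ (j+1)))^2 with hK_def
    have hK0 : (0:ℝ) < K := by rw [hK_def]; positivity
    have h1 : 160 * (A - a) ≤ 37 * A := by
      have h : 160 * (A - a) * K ≤ 37 * A * K := by nlinarith [inv1, hA1, hK0]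
      exact le_of_mul_le_mul_right h hK0
    have h2 : 160 * c ≤ 37 * B := by
      have h : 160 * c * K ≤ 37 * B * K := by nlinarith [inv2, hB1, hK0]
      exact le_of_mul_le_mul_right h hK0
    have hA0 : (0:ℝ) < A := by linarith
    have hB0 : (0:ℝ) < B := by linarith
    have d1 : (123:ℝ)/160 ≤ a / A := by
      rw [le_div_iff₀ hA0]; linarith
    have d2 : (123:ℝ)/160 ≤ bt / B := by
      rw [le_div_iff₀ hB0]; linarith
    linarith
end

section
/- In the infinite word u^{(h)} = lim_{i→∞} σ_h σ_{h+1} ⋯ σ_{h+i-1}(0), every occurrence of the factor 01 is preceded by 1 0^{m_h - 1}; consequently, every bispecial factor of u^{(h)} containing 01 also contains 10. -/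
/-- `v` is a bispecial factor of the infinite word `U`. -/
def Bispecial (U : ℕ → Bool) (v : List Bool) : Prop :=
  IsFactor U (false :: v) ∧ IsFactor U (true :: v) ∧
    IsFactor U (v ++ [false]) ∧ IsFactor U (v ++ [true])


open List

/-!
The word `u^{(h)} = σ_h(u^{(h+1)})` is a concatenation of blocks `0^{m_h} 1^t` with `t ≥ 1`, so
each maximal run of zeros in it has length exactly `m_h`; this is read off the finite
prefixes `σ_h ⋯ σ_{h+i-1}(0)`, which are such concatenations. Hence an occurrence of `01` is
preceded by `1 0^{m_h - 1}` unless its run of zeros starts the word. A bispecial factor `v`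
containing `01` but not `10` is `0^a 1^b` with `a, b > 0`; as `1v` occurs, `a ≥ m_h`, and then
`0v` contains the run `0^{m_h + 1}`.
-/

inductive IsBlockWord (m : ℕ) : List Bool → Prop
  | nil : IsBlockWord m []
  | cons {t : ℕ} (ht : 0 < t) {w : List Bool} (hw : IsBlockWord m w) :
      IsBlockWord m (replicate m false ++ replicate t true ++ w)

lemma getD_block_append (m t : ℕ) (w : List Bool) (i : ℕ) :
    (replicate m false ++ replicate t true ++ w).getD i true =
      if i < m then false else if i < m + t then true else w.getD (i - (m + t)) true := by
  split_ifs with h₁ h₂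
  · rw [getD_append _ _ _ _ (by simp; omega), getD_append _ _ _ _ (by simpa),
      getD_replicate _ h₁]
  · rw [getD_append _ _ _ _ (by simp; omega), getD_append_right _ _ _ _ (by simpa using h₁),
      getD_replicate _ (by simp; omega)]
  · rw [getD_append_right _ _ _ _ (by simp; omega)]
    simp

namespace IsBlockWord

variable {m : ℕ} {W : List Bool}

theorem exists_zero_run (hW : IsBlockWord m W) {p : ℕ} (h₀ : W.getD p true = false)
    (h₁ : W.getD (p + 1) true = true) :
    ∃ s, s + m = p + 1 ∧ (∀ j < m, W.getD (s + j) true = false) ∧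
      (s = 0 ∨ W.getD (s - 1) true = true) := by
  induction hW generalizing p with
  | nil => simp at h₀
  | @cons t ht w _ ih =>
    simp only [getD_block_append] at h₀ h₁ ⊢
    by_cases hp : p < m + t
    · have hpm : p + 1 = m := by split_ifs at h₀ h₁ <;> omega
      exact ⟨0, by omega, fun j hj => by simp [hj], Or.inl rfl⟩
    · rw [if_neg (by omega), if_neg hp] at h₀
      rw [if_neg (by omega), if_neg (by omega), show p + 1 - (m + t) = p - (m + t) + 1 by omega]
        at h₁
      obtain ⟨s, hsp, hzero, hone⟩ := ih h₀ h₁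
      refine ⟨s + (m + t), by omega, fun j hj => ?_, Or.inr ?_⟩
      · rw [if_neg (by omega), if_neg (by omega), show s + (m + t) + j - (m + t) = s + j by omega]
        exact hzero j hj
      · rcases Nat.eq_zero_or_pos s with rfl | hs
        · rw [if_neg (by omega), if_pos (by omega)]
        · rw [if_neg (by omega), if_neg (by omega),
            show s + (m + t) - 1 - (m + t) = s - 1 by omega]
          exact hone.resolve_left hs.ne'

theorem exists_getD_eq_true (hW : IsBlockWord m W) (p : ℕ) :
    ∃ j ≤ m, W.getD (p + j) true = true := by
  induction hW generalizing p with
  | nil => exact ⟨0, Nat.zero_le _, rfl⟩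
  | @cons t ht w _ ih =>
    simp only [getD_block_append]
    by_cases hp : p < m + t
    · refine ⟨m - p, by omega, ?_⟩
      rw [if_neg (by omega), if_pos (by omega)]
    · obtain ⟨j, hj, hone⟩ := ih (p - (m + t))
      refine ⟨j, hj, ?_⟩
      rwa [if_neg (by omega), if_neg (by omega), show p + j - (m + t) = p - (m + t) + j by omega]

end IsBlockWord

theorem IsFactor.exists_forall_getElem {U : ℕ → Bool} {x : List Bool} (hx : IsFactor U x) :
    ∃ k, ∀ i (hi : i < x.length), x[i] = U (k + i) := by
  obtain ⟨k, hk⟩ := hx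
  exact ⟨k, fun i hi => by simp [getElem_of_eq hk hi]⟩

theorem exists_eq_replicate_append_replicate_of_not_infix {v : List Bool}
    (hv : ¬ [true, false] <:+: v) : ∃ a b, v = replicate a false ++ replicate b true := by
  induction v with
  | nil => exact ⟨0, 0, rfl⟩
  | cons c v ih =>
    obtain ⟨a, b, rfl⟩ := ih (fun h => hv (h.trans (suffix_cons _ _).isInfix))
    cases c with
    | false => exact ⟨a + 1, b, rfl⟩
    | true =>
      cases a with
      | zero => exact ⟨0, b + 1, rfl⟩
      | succ a => exact absurd ⟨[], replicate a false ++ replicate b true, rfl⟩ hv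

/-- `U` agrees with block words on arbitrarily long prefixes. Reading the block words with default
`true` makes their run properties hold at every index, not only inside the word. -/
def IsBlockLimit (m : ℕ) (U : ℕ → Bool) : Prop :=
  ∀ N, ∃ W, IsBlockWord m W ∧ ∀ i < N, U i = W.getD i true

namespace IsBlockLimit

variable {m : ℕ} {U : ℕ → Bool}

theorem exists_zero_run (hU : IsBlockLimit m U) {p : ℕ} (h₀ : U p = false)
    (h₁ : U (p + 1) = true) :
    ∃ s, s + m = p + 1 ∧ (∀ j < m, U (s + j) = false) ∧ (s = 0 ∨ U (s - 1) = true) := by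
  obtain ⟨W, hW, hUW⟩ := hU (p + 2)
  rw [hUW p (by omega)] at h₀
  rw [hUW (p + 1) (by omega)] at h₁
  obtain ⟨s, hsp, hzero, hone⟩ := hW.exists_zero_run h₀ h₁
  refine ⟨s, hsp, fun j hj => ?_, hone.imp_right fun h => ?_⟩
  · rw [hUW _ (by omega)]; exact hzero j hj
  · rw [hUW _ (by omega)]; exact h

theorem exists_eq_true (hU : IsBlockLimit m U) (p : ℕ) : ∃ j ≤ m, U (p + j) = true := by
  obtain ⟨W, hW, hUW⟩ := hU (p + m + 1)
  obtain ⟨j, hj, h⟩ := hW.exists_getD_eq_true p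
  exact ⟨j, hj, by rw [hUW _ (by omega)]; exact h⟩

theorem suffix_of_isFactor_append_false_true (hU : IsBlockLimit m U) {w : List Bool}
    (hw : IsFactor U (w ++ [false, true])) (hmw : m ≤ w.length) :
    true :: replicate (m - 1) false <:+ w := by
  obtain ⟨k, hk⟩ := hw.exists_forall_getElem
  have hkw : ∀ i (hi : i < w.length), w[i] = U (k + i) := fun i hi =>
    (getElem_append_left hi).symm.trans (hk i (by simp; omega))
  have h₀ : U (k + w.length) = false := by
    rw [← hk _ (by simp), getElem_append_right (by simp)]; simp
  have h₁ : U (k + w.length + 1) = true := by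
    rw [add_assoc, ← hk _ (by simp), getElem_append_right (by simp)]; simp
  obtain ⟨s, hsp, hzero, hstart⟩ := hU.exists_zero_run h₀ h₁
  have hone : U (s - 1) = true := hstart.resolve_left (by omega)
  obtain ⟨m, rfl⟩ : ∃ m', m = m' + 1 := Nat.exists_eq_add_one.2 <| Nat.pos_of_ne_zero fun hm => by
    rw [show s - 1 = k + w.length by omega, h₀] at hone
    simp at hone
  rw [suffix_iff_eq_drop]
  refine ext_getElem (by simp; omega) fun i hi _ => ?_
  simp only [length_cons, length_replicate, Nat.add_sub_cancel] at hi ⊢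
  rw [getElem_drop, hkw _ (by omega)]
  cases i with
  | zero => rw [show k + (w.length - (m + 1) + 0) = s - 1 by omega, hone]; rfl
  | succ j =>
    rw [show k + (w.length - (m + 1) + (j + 1)) = s + j by omega, hzero j (by omega),
      getElem_cons_succ, getElem_replicate]

theorem infix_true_false_of_bispecial (hU : IsBlockLimit m U) {v : List Bool}
    (hv : Bispecial U v) (h01 : [false, true] <:+: v) : [true, false] <:+: v := by
  by_contra h10
  obtain ⟨a, b, rfl⟩ := exists_eq_replicate_append_replicate_of_not_infix h10
  have ha : 0 < a := Nat.pos_of_ne_zero fun ha => by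
    simpa [ha] using h01.subset (show false ∈ [false, true] by simp)
  have hb : 0 < b := Nat.pos_of_ne_zero fun hb => by
    simpa [hb] using h01.subset (show true ∈ [false, true] by simp)
  obtain ⟨k, hk⟩ := hv.2.1.exists_forall_getElem
  have hone : U k = true := by rw [← add_zero k, ← hk 0 (by simp), getElem_cons_zero]
  have hzero : ∀ j < a, U (k + (j + 1)) = false := fun j hj => by
    rw [← hk _ (by simp; omega), getElem_cons_succ, getElem_append_left (by simpa),
      getElem_replicate]
  have hone' : U (k + a + 1) = true := by
    rw [add_assoc, ← hk _ (by simp; omega), getElem_cons_succ, getElem_append_right (by simp)]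
    simp
  -- a run of `m` zeros ending at `k + a` cannot reach back to the `1` at `k`
  have hma : m ≤ a := by
    by_contra hma
    have h₀ : U (k + a) = false := by
      simpa [show a - 1 + 1 = a by omega] using hzero (a - 1) (by omega)
    obtain ⟨s, hsp, hzero', -⟩ := hU.exists_zero_run h₀ hone'
    have := hzero' (k - s) (by omega)
    rw [show s + (k - s) = k by omega, hone] at this
    simp at this
  -- so `0v` starts with `m + 1` zeros
  obtain ⟨k', hk'⟩ := hv.1.exists_forall_getElem
  obtain ⟨j, hj, hj1⟩ := hU.exists_eq_true k'
  rw [← hk' j (by simp; omega)] at hj1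
  cases j with
  | zero => simp at hj1
  | succ j =>
    rw [getElem_cons_succ, getElem_append_left (by simp; omega), getElem_replicate] at hj1
    simp at hj1

end IsBlockLimit

section LimWord

variable (l m n : ℕ → ℕ)

theorem isBlockWord_subw {h : ℕ} (hl : 0 < l h) (hn : 0 < n h) (w : List Bool) :
    IsBlockWord (m h) (subw l m n h w) := by
  induction w with
  | nil => exact .nil
  | cons c w ih => exact .cons (by cases c <;> simpa) ih

theorem two_mul_length_le_length_subw {h : ℕ} (hl : 0 < l h) (hm : 0 < m h) (hn : 0 < n h)
    (w : List Bool) : 2 * w.length ≤ (subw l m n h w).length := by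
  induction w with
  | nil => simp
  | cons c w ih =>
    have : 0 < if c then n h else l h := by cases c <;> simpa
    simp only [subw, flatMap_cons, length_append, length_replicate, length_cons] at ih ⊢
    omega

variable {l m n}

theorem lt_length_wordIter (hl : ∀ i, 0 < l i) (hm : ∀ i, 0 < m i) (hn : ∀ i, 0 < n i)
    (i h : ℕ) : i < (wordIter l m n i h).length := by
  induction i generalizing h with
  | zero => simp [wordIter]
  | succ i ih =>
    have := two_mul_length_le_length_subw l m n (hl h) (hm h) (hn h) (wordIter l m n i (h + 1))
    have := ih (h + 1)
    simp only [wordIter]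
    omega

theorem wordIter_prefix_succ (hm : ∀ i, 0 < m i) (i h : ℕ) :
    wordIter l m n i h <+: wordIter l m n (i + 1) h := by
  induction i generalizing h with
  | zero =>
    obtain ⟨k, hk⟩ := Nat.exists_eq_add_one.2 (hm h)
    exact ⟨replicate k false ++ replicate (l h) true, by simp [wordIter, subw, hk, replicate_succ]⟩
  | succ i ih => exact (ih (h + 1)).flatMap _

theorem wordIter_prefix_of_le (hm : ∀ i, 0 < m i) {i j : ℕ} (hij : i ≤ j) (h : ℕ) :
    wordIter l m n i h <+: wordIter l m n j h := by
  induction j, hij using Nat.le_induction with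
  | base => exact prefix_rfl
  | succ j _ ih => exact ih.trans (wordIter_prefix_succ hm j h)

theorem isBlockLimit_limWord (hl : ∀ i, 0 < l i) (hm : ∀ i, 0 < m i) (hn : ∀ i, 0 < n i)
    (h : ℕ) : IsBlockLimit (m h) (limWord l m n h) := by
  intro N
  refine ⟨wordIter l m n (N + 1) h, isBlockWord_subw l m n (hl h) (hn h) _, fun i hi => ?_⟩
  have := lt_length_wordIter hl hm hn (i + 1) h
  have := lt_length_wordIter hl hm hn (N + 1) h
  rw [limWord, getD_eq_getElem _ _ (by omega), getD_eq_getElem _ _ (by omega)]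
  exact (wordIter_prefix_of_le hm (by omega : i + 1 ≤ N + 1) h).getElem _

end LimWord

theorem stmt14 (l m n : ℕ → ℕ) (hlpos : ∀ i, 0 < l i)
    (hlm : ∀ i, l i < m i) (hmn : ∀ i, m i < n i) (h : ℕ) :
    (∀ w : List Bool, IsFactor (limWord l m n h) (w ++ [false, true]) →
        m h ≤ w.length → (true :: List.replicate (m h - 1) false) <:+ w) ∧
      (∀ v : List Bool, Bispecial (limWord l m n h) v →
        [false, true] <:+: v → [true, false] <:+: v) := by
  have hm : ∀ i, 0 < m i := fun i => (hlpos i).trans (hlm i)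
  have hU := isBlockLimit_limWord hlpos hm (fun i => (hm i).trans (hmn i)) h
  exact ⟨fun _ => hU.suffix_of_isFactor_append_false_true,
    fun _ => hU.infix_true_false_of_bispecial⟩
end
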